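/- A subshift X ⊆ Σ^ℤ has a g-function if and only if X has property g. -/

import Mathlib

open Set Filter Topology

/-! Basic symbolic dynamics notions.

* The alphabet is a nonempty finite type `A` with the discrete topology; `A^ℤ` and `A^ℕ`
  carry the product topology.
* A left-infinite sequence `x⁻ = (x_i)_{i ≤ 0}` is encoded as `u : ℕ → A` with `u n = x (-n)`.
* Finite words are lists, read left to right.
-/

/-- The shift `S`. -/
def shiftMap {A : Type*} (x : ℤ → A) : ℤ → A := fun i => x (i + 1)

/-- A subshift: a nonempty closed shift-invariant subset of `A^ℤ`. -/
def IsSubshift {A : Type*} [TopologicalSpace A] (X : Set (ℤ → A)) : Prop :=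
  X.Nonempty ∧ IsClosed X ∧ shiftMap '' X = X

/-- `X⁻`: the left-infinite rays of points of `X` (encoded via `u n = x (-n)`). -/
def Xminus {A : Type*} (X : Set (ℤ → A)) : Set (ℕ → A) :=
  {u | ∃ x ∈ X, ∀ n : ℕ, u n = x (-(n : ℤ))}

/-- The word `w` occurs in `x` (as a block of consecutive coordinates). -/
def Occurs {A : Type*} (w : List A) (x : ℤ → A) : Prop :=
  ∃ i : ℤ, ∀ j : Fin w.length, x (i + ((j : ℕ) : ℤ)) = w.get j

/-- A finite word is admissible for `X` if it occurs in some point of `X`. -/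
def Admissible {A : Type*} (X : Set (ℤ → A)) (w : List A) : Prop :=
  ∃ x ∈ X, Occurs w x

/-- The left ray `u` ends in the word `w`, i.e. `(x_{-k},…,x_0) = w` where `|w| = k+1`. -/
def EndsIn {A : Type*} (u : ℕ → A) (w : List A) : Prop :=
  ∀ j : Fin w.length, u (w.length - 1 - (j : ℕ)) = w.get j

/-- `Γ₁⁺(x⁻)`: the letters that can follow the left ray `u` in `X`. -/
def Gamma1 {A : Type*} (X : Set (ℤ → A)) (u : ℕ → A) : Set A :=
  {σ | ∃ x ∈ X, (∀ n : ℕ, x (-(n : ℤ)) = u n) ∧ x 1 = σ}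

/-- `x` carries the word `b` on the coordinate interval `[-(|b| - 1), 0]`. -/
def EndsAtZero {A : Type*} (x : ℤ → A) (b : List A) : Prop :=
  ∀ j : Fin b.length, x (((j : ℕ) : ℤ) - ((b.length : ℤ) - 1)) = b.get j

/-- `c ∈ ω⁺(b)`: every point of `X` carrying `b` ending at coordinate `0` can be modified
on the positive coordinates so as to continue with the word `c`. -/
def OmegaWord {A : Type*} (X : Set (ℤ → A)) (b c : List A) : Prop :=
  ∀ x ∈ X, EndsAtZero x b →
    ∃ x' ∈ X, (∀ i : ℤ, i ≤ 0 → x' i = x i) ∧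
      ∀ j : Fin c.length, x' (((j : ℕ) : ℤ) + 1) = c.get j

/-- `ω₁⁺(b)`. -/
def omega1 {A : Type*} (X : Set (ℤ → A)) (b : List A) : Set A :=
  {σ | OmegaWord X b [σ]}

/-- The word `(x_{-n},…,x_0)` read off the left ray `u`. -/
def lastWord {A : Type*} (u : ℕ → A) (n : ℕ) : List A :=
  List.ofFn fun j : Fin (n + 1) => u (n - (j : ℕ))

/-- `Δ₁⁺(x⁻) = ⋃ₙ ω₁⁺((x_{-n},…,x_0))`. -/
def Delta1 {A : Type*} (X : Set (ℤ → A)) (u : ℕ → A) : Set A :=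
  ⋃ n : ℕ, omega1 X (lastWord u n)

/-- Property g: `Δ₁⁺(x⁻) ≠ ∅` for every `x⁻ ∈ X⁻`. -/
def PropertyG {A : Type*} (X : Set (ℤ → A)) : Prop :=
  ∀ u ∈ Xminus X, (Delta1 X u).Nonempty

/-- A g-function for `X`, encoded as a total function `g : (ℕ → A) → A → ℝ`:
continuity (of the restriction to the graph of `Γ₁⁺`, i.e. of the map on
`{(x⁻,σ) : σ ∈ Γ₁⁺(x⁻)}`), values in `[0,1]` there, and the normalization
`∑_{σ ∈ Γ₁⁺(x⁻)} g (x⁻, σ) = 1`. -/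
def IsGFunction {A : Type*} [Fintype A] [TopologicalSpace A] (X : Set (ℤ → A))
    (g : (ℕ → A) → A → ℝ) : Prop :=
  ContinuousOn (fun p : (ℕ → A) × A => g p.1 p.2)
      {p : (ℕ → A) × A | p.1 ∈ Xminus X ∧ p.2 ∈ Gamma1 X p.1} ∧
  (∀ u ∈ Xminus X, ∀ σ ∈ Gamma1 X u, g u σ ∈ Set.Icc (0 : ℝ) 1) ∧
  (∀ u ∈ Xminus X, ∑ σ : A, (Gamma1 X u).indicator (g u) σ = 1)

/-- Property (D): for every admissible word `b` and letter `σ` with `bσ` admissible there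
is a word `a` with `ab` admissible and `σ ∈ ω₁⁺(ab)`. -/
def PropertyD {A : Type*} (X : Set (ℤ → A)) : Prop :=
  ∀ (b : List A) (σ : A), b ≠ [] → Admissible X (b ++ [σ]) →
    ∃ a : List A, a ≠ [] ∧ Admissible X (a ++ b) ∧ σ ∈ omega1 X (a ++ b)

/-!
Property g gives a g-function: at a ray `x⁻`, take the uniform distribution on `ω₁⁺` of the
shortest final word of `x⁻` at which it is nonempty. It only depends on finitely many coordinates
of `x⁻`, so it is locally constant, and `ω₁⁺` of a final word of `x⁻` lies in `Γ₁⁺(x⁻)`.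

Conversely, by compactness of `X` the map `y⁻ ↦ Γ₁⁺(y⁻)` is upper semicontinuous. If
`σ ∈ Γ₁⁺(x⁻) \ Δ₁⁺(x⁻)`, then `x⁻` is a limit of rays `y⁻` with `σ ∉ Γ₁⁺(y⁻)`; along those on
which `Γ₁⁺(y⁻)` is a fixed set `Γ ⊆ Γ₁⁺(x⁻)`, continuity of `g` gives `∑_{τ ∈ Γ} g(x⁻, τ) = 1`,
which forces `g(x⁻, σ) = 0`. If `Δ₁⁺(x⁻) = ∅` this holds for every `σ ∈ Γ₁⁺(x⁻)`, contradicting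
the normalization.
-/

lemma Filter.exists_frequently_eq {α β : Type*} [Finite β] {l : Filter α} [l.NeBot] (f : α → β) :
    ∃ b, ∃ᶠ x in l, f x = b := by
  by_contra! h
  obtain ⟨x, hx⟩ := (eventually_all.2 h).exists
  exact hx (f x) rfl

section Abstract

variable {α β : Type*} [TopologicalSpace α] [TopologicalSpace β] [Fintype β] {P : Set α}
  {Γ : α → Set β} {g : α → β → ℝ}

lemma sum_indicator_eq_one_of_tendsto
    (hg : ContinuousOn (fun p : α × β => g p.1 p.2) {p | p.1 ∈ P ∧ p.2 ∈ Γ p.1})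
    (hsum : ∀ v ∈ P, ∑ σ, (Γ v).indicator (g v) σ = 1) {u : α} (hu : u ∈ P)
    {l : Filter α} [l.NeBot] (hl : Tendsto id l (𝓝 u)) {Γ' : Set β}
    (hΓ' : ∀ᶠ v in l, v ∈ P ∧ Γ v = Γ') (hΓ'u : Γ' ⊆ Γ u) :
    ∑ σ, Γ'.indicator (g u) σ = 1 := by
  have hlim : ∀ σ, Tendsto (fun v => Γ'.indicator (g v) σ) l (𝓝 (Γ'.indicator (g u) σ)) := by
    intro σ
    by_cases hσ : σ ∈ Γ'
    · simp only [Set.indicator_of_mem hσ]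
      refine (hg (u, σ) ⟨hu, hΓ'u hσ⟩).tendsto.comp (f := fun v => (v, σ))
        (tendsto_nhdsWithin_iff.2 ⟨?_, ?_⟩)
      · exact hl.prodMk_nhds tendsto_const_nhds
      · filter_upwards [hΓ'] with v hv
        exact ⟨hv.1, hv.2 ▸ hσ⟩
    · simp only [Set.indicator_of_notMem hσ, tendsto_const_nhds]
  refine tendsto_nhds_unique (tendsto_finsetSum _ fun σ _ => hlim σ) ?_
  refine tendsto_const_nhds.congr' ?_
  filter_upwards [hΓ'] with v hv
  rw [← hsum v hv.1, hv.2]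

lemma eq_zero_of_mem_closure_setOf_notMem
    (hg : ContinuousOn (fun p : α × β => g p.1 p.2) {p | p.1 ∈ P ∧ p.2 ∈ Γ p.1})
    (hnonneg : ∀ v ∈ P, ∀ σ ∈ Γ v, 0 ≤ g v σ)
    (hsum : ∀ v ∈ P, ∑ σ, (Γ v).indicator (g v) σ = 1) {u : α} (hu : u ∈ P)
    (hΓ : ∀ᶠ v in 𝓝 u, Γ v ⊆ Γ u) {σ : β} (hσ : σ ∈ Γ u)
    (hcl : u ∈ closure {v | v ∈ P ∧ σ ∉ Γ v}) : g u σ = 0 := by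
  have := mem_closure_iff_nhdsWithin_neBot.1 hcl
  obtain ⟨Γ', hΓ'⟩ := Filter.exists_frequently_eq (l := 𝓝[{v | v ∈ P ∧ σ ∉ Γ v}] u) Γ
  have := frequently_iff_neBot.1 hΓ'
  set l := 𝓝[{v | v ∈ P ∧ σ ∉ Γ v}] u ⊓ 𝓟 {v | Γ v = Γ'}
  have hl : Tendsto id l (𝓝 u) := inf_le_left.trans nhdsWithin_le_nhds
  have hmem : ∀ᶠ v in l, v ∈ P ∧ σ ∉ Γ v := mem_inf_of_left self_mem_nhdsWithin
  have hconst : ∀ᶠ v in l, Γ v = Γ' := mem_inf_of_right (mem_principal_self _)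
  have hev := (hmem.and hconst).and (hl.eventually hΓ)
  obtain ⟨v, ⟨⟨-, hσv⟩, rfl⟩, hvu⟩ := hev.exists
  have hone := sum_indicator_eq_one_of_tendsto hg hsum hu hl
    (hmem.and hconst |>.mono fun w hw => ⟨hw.1.1, hw.2⟩) hvu
  have hdiff : ∀ τ ∈ Finset.univ, 0 ≤ (Γ u).indicator (g u) τ - (Γ v).indicator (g u) τ := by
    intro τ _
    by_cases hτ : τ ∈ Γ v
    · simp [Set.indicator_of_mem hτ, Set.indicator_of_mem (hvu hτ)]
    · rw [Set.indicator_of_notMem hτ, sub_zero]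
      exact Set.indicator_nonneg (hnonneg u hu) τ
  have := (Finset.sum_eq_zero_iff_of_nonneg hdiff).1
    (by rw [Finset.sum_sub_distrib, hsum u hu, hone, sub_self]) σ (Finset.mem_univ σ)
  simpa [Set.indicator_of_mem hσ, Set.indicator_of_notMem hσv] using this

end Abstract

lemma sum_indicator_const_eq_ncard_mul {β : Type*} [Fintype β] (s : Set β) (c : ℝ) :
    ∑ σ, s.indicator (fun _ => c) σ = s.ncard * c := by
  classical
  rw [Finset.sum_indicator_eq_sum_filter, Finset.sum_const, nsmul_eq_mul,
    Set.filter_mem_univ_eq_toFinset, ← Set.ncard_eq_toFinset_card']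

section SymbolicDynamics

variable {A : Type*}

def leftRay (x : ℤ → A) : ℕ → A := fun n => x (-(n : ℤ))

lemma leftRay_eq_leftRay_iff {x y : ℤ → A} : leftRay x = leftRay y ↔ ∀ i ≤ 0, x i = y i := by
  refine ⟨fun h i hi => ?_, fun h => funext fun n => h _ (by omega)⟩
  obtain ⟨n, rfl⟩ := Int.exists_eq_neg_ofNat hi
  exact congrFun h n

lemma mem_xminus_iff {X : Set (ℤ → A)} {u : ℕ → A} : u ∈ Xminus X ↔ ∃ x ∈ X, leftRay x = u :=
  exists_congr fun x => and_congr_right fun _ => by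
    rw [funext_iff]
    exact forall_congr' fun n => eq_comm

lemma mem_gamma1_iff {X : Set (ℤ → A)} {u : ℕ → A} {σ : A} :
    σ ∈ Gamma1 X u ↔ ∃ x ∈ X, leftRay x = u ∧ x 1 = σ := by
  simp only [Gamma1, leftRay, funext_iff]
  rfl

lemma endsAtZero_lastWord_iff {x : ℤ → A} {u : ℕ → A} {n : ℕ} :
    EndsAtZero x (lastWord u n) ↔ ∀ k ≤ n, leftRay x k = u k := by
  simp only [EndsAtZero, lastWord, leftRay, List.length_ofFn, List.get_ofFn, Fin.forall_iff]
  constructor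
  · intro h k hk
    convert h (n - k) (by omega) using 2 <;> simp [Nat.sub_sub_self hk]
    omega
  · intro h j hj
    convert h (n - j) (by omega) using 2
    · omega
    · simp

lemma mem_omega1_iff {X : Set (ℤ → A)} {b : List A} {σ : A} :
    σ ∈ omega1 X b ↔ ∀ x ∈ X, EndsAtZero x b →
      ∃ x' ∈ X, (∀ i ≤ 0, x' i = x i) ∧ x' 1 = σ := by
  simp [omega1, OmegaWord]

lemma mem_omega1_lastWord_iff {X : Set (ℤ → A)} {u : ℕ → A} {n : ℕ} {σ : A} :
    σ ∈ omega1 X (lastWord u n) ↔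
      ∀ v ∈ Xminus X, (∀ k ≤ n, v k = u k) → σ ∈ Gamma1 X v := by
  simp only [mem_omega1_iff, endsAtZero_lastWord_iff, mem_xminus_iff, mem_gamma1_iff,
    ← leftRay_eq_leftRay_iff]
  constructor
  · rintro h _ ⟨x, hx, rfl⟩ hxu
    exact h x hx hxu
  · intro h x hx hxu
    exact h _ ⟨x, hx, rfl⟩ hxu

lemma lastWord_congr {u v : ℕ → A} {n : ℕ} (h : ∀ k ≤ n, v k = u k) :
    lastWord v n = lastWord u n := by
  simp only [lastWord]
  congr 1
  funext j
  exact h _ (by omega)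

section Topology

variable [TopologicalSpace A]

lemma tendsto_nhds_of_forall_le_eq {w : ℕ → ℕ → A} {u : ℕ → A} (h : ∀ n, ∀ k ≤ n, w n k = u k) :
    Tendsto w atTop (𝓝 u) :=
  tendsto_pi_nhds.2 fun k =>
    tendsto_const_nhds.congr' <| (eventually_ge_atTop k).mono fun n hn => (h n k hn).symm

lemma continuous_leftRay : Continuous (leftRay : (ℤ → A) → ℕ → A) :=
  continuous_pi fun _ => continuous_apply _

variable [DiscreteTopology A]

lemma eventually_forall_le_eq (u : ℕ → A) (n : ℕ) : ∀ᶠ v in 𝓝 u, ∀ k ≤ n, v k = u k :=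
  (Set.finite_Iic n).eventually_all.2 fun k _ =>
    (continuous_apply k).continuousAt.eventually (isOpen_discrete {u k} |>.mem_nhds rfl)

variable [Finite A]

lemma isClosed_setOf_mem_gamma1 {X : Set (ℤ → A)} (hX : IsClosed X) (σ : A) :
    IsClosed {u | σ ∈ Gamma1 X u} := by
  have : {u | σ ∈ Gamma1 X u} = leftRay '' (X ∩ {x | x 1 = σ}) := by
    ext u
    simp only [mem_gamma1_iff, Set.mem_image, Set.mem_inter_iff]
    grind
  rw [this]
  exact ((hX.inter (isClosed_eq (continuous_apply 1) continuous_const)).isCompact.image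
    continuous_leftRay).isClosed

lemma eventually_gamma1_subset {X : Set (ℤ → A)} (hX : IsClosed X) (u : ℕ → A) :
    ∀ᶠ v in 𝓝 u, Gamma1 X v ⊆ Gamma1 X u := by
  have : ∀ σ ∈ (Gamma1 X u)ᶜ, ∀ᶠ v in 𝓝 u, σ ∉ Gamma1 X v := fun σ hσ =>
    (isClosed_setOf_mem_gamma1 hX σ).isOpen_compl.mem_nhds hσ
  filter_upwards [(Set.toFinite _).eventually_all.2 this] with v hv σ hσv
  by_contra hσu
  exact hv σ hσu hσv

end Topology

lemma mem_closure_setOf_notMem_gamma1 [TopologicalSpace A] {X : Set (ℤ → A)} {u : ℕ → A}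
    {σ : A} (hσ : σ ∉ Delta1 X u) : u ∈ closure {v | v ∈ Xminus X ∧ σ ∉ Gamma1 X v} := by
  have : ∀ n, ∃ v, (v ∈ Xminus X ∧ σ ∉ Gamma1 X v) ∧ ∀ k ≤ n, v k = u k := by
    intro n
    have hn : σ ∉ omega1 X (lastWord u n) := fun h => hσ (Set.mem_iUnion.2 ⟨n, h⟩)
    simp only [mem_omega1_lastWord_iff, not_forall] at hn
    obtain ⟨v, hv, hvu, hσv⟩ := hn
    exact ⟨v, ⟨hv, hσv⟩, hvu⟩
  choose w hw hwu using this
  exact mem_closure_of_tendsto (tendsto_nhds_of_forall_le_eq hwu) (Eventually.of_forall hw)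

lemma propertyG_of_isGFunction [Fintype A] [TopologicalSpace A] [DiscreteTopology A]
    {X : Set (ℤ → A)} (hX : IsClosed X) {g : (ℕ → A) → A → ℝ} (hg : IsGFunction X g) :
    PropertyG X := by
  obtain ⟨hcont, hIcc, hsum⟩ := hg
  intro u hu
  by_contra hΔ
  have hzero : ∀ σ ∈ Gamma1 X u, g u σ = 0 := fun σ hσ =>
    eq_zero_of_mem_closure_setOf_notMem hcont (fun v hv τ hτ => (hIcc v hv τ hτ).1) hsum hu
      (eventually_gamma1_subset hX u) hσ (mem_closure_setOf_notMem_gamma1 fun h => hΔ ⟨σ, h⟩)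
  simpa [Set.indicator_apply_eq_zero.2 (hzero _)] using hsum u hu

open Classical in
noncomputable def firstOmega (X : Set (ℤ → A)) (u : ℕ → A) : Set A :=
  if h : ∃ n, (omega1 X (lastWord u n)).Nonempty then omega1 X (lastWord u (Nat.find h)) else ∅

lemma firstOmega_nonempty {X : Set (ℤ → A)} {u : ℕ → A} (h : (Delta1 X u).Nonempty) :
    (firstOmega X u).Nonempty := by
  classical
  have h' := Set.nonempty_iUnion.1 h
  rw [firstOmega, dif_pos h']
  exact Nat.find_spec h'

lemma firstOmega_subset_gamma1 {X : Set (ℤ → A)} {u : ℕ → A} (hu : u ∈ Xminus X) :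
    firstOmega X u ⊆ Gamma1 X u := by
  unfold firstOmega
  split_ifs
  · exact fun σ hσ => mem_omega1_lastWord_iff.1 hσ u hu fun _ _ => rfl
  · exact Set.empty_subset _

lemma eventually_firstOmega_eq [TopologicalSpace A] [DiscreteTopology A] {X : Set (ℤ → A)}
    {u : ℕ → A} (h : (Delta1 X u).Nonempty) : ∀ᶠ v in 𝓝 u, firstOmega X v = firstOmega X u := by
  classical
  have hu := Set.nonempty_iUnion.1 h
  filter_upwards [eventually_forall_le_eq u (Nat.find hu)] with v hvu
  have hword : ∀ n ≤ Nat.find hu, lastWord v n = lastWord u n := fun n hn =>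
    lastWord_congr fun k hk => hvu k (hk.trans hn)
  have hv : ∃ n, (omega1 X (lastWord v n)).Nonempty :=
    ⟨_, hword _ le_rfl ▸ Nat.find_spec hu⟩
  have hfind : Nat.find hv = Nat.find hu :=
    (Nat.find_eq_iff hv).2 ⟨hword _ le_rfl ▸ Nat.find_spec hu,
      fun n hn => hword n hn.le ▸ Nat.find_min hu hn⟩
  simp only [firstOmega, dif_pos hu, dif_pos hv, hfind, hword _ le_rfl]

noncomputable def uniformG (X : Set (ℤ → A)) (u : ℕ → A) : A → ℝ :=
  (firstOmega X u).indicator fun _ => ((firstOmega X u).ncard : ℝ)⁻¹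

lemma isGFunction_uniformG [Fintype A] [TopologicalSpace A] [DiscreteTopology A]
    {X : Set (ℤ → A)} (hX : PropertyG X) : IsGFunction X (uniformG X) := by
  refine ⟨continuousOn_of_forall_continuousAt fun p hp => ?_, fun u hu σ _ => ⟨?_, ?_⟩,
    fun u hu => ?_⟩
  · refine (continuousAt_const (y := uniformG X p.1 p.2)).congr ?_
    filter_upwards [continuous_fst.continuousAt.eventually (eventually_firstOmega_eq (hX _ hp.1)),
      continuous_snd.continuousAt.eventually (isOpen_discrete {p.2} |>.mem_nhds rfl)]
      with q hq1 hq2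
    simp only [uniformG, hq1, Set.mem_singleton_iff.1 hq2]
  · exact Set.indicator_apply_nonneg fun _ => by positivity
  · refine Set.indicator_apply_le' (fun hσ => inv_le_one_of_one_le₀ ?_) fun _ => zero_le_one
    exact Nat.one_le_cast.2 ((Set.ncard_pos (Set.toFinite _)).2 ⟨σ, hσ⟩)
  · have hne := firstOmega_nonempty (hX u hu)
    rw [uniformG, Set.indicator_indicator, Set.inter_eq_right.2 (firstOmega_subset_gamma1 hu),
      sum_indicator_const_eq_ncard_mul]
    exact mul_inv_cancel₀ (Nat.cast_ne_zero.2 ((Set.ncard_pos (Set.toFinite _)).2 hne).ne')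

end SymbolicDynamics

theorem stmt3_general {A : Type*} [Fintype A] [TopologicalSpace A] [DiscreteTopology A]
    (X : Set (ℤ → A)) (hX : IsSubshift X) :
    (∃ g : (ℕ → A) → A → ℝ, IsGFunction X g) ↔ PropertyG X :=
  ⟨fun ⟨_, hg⟩ => propertyG_of_isGFunction hX.2.1 hg,
    fun hg => ⟨uniformG X, isGFunction_uniformG hg⟩⟩

/-- Theorem 2.4, (a) ⟺ (b).  A subshift has a g-function if and only
if it has property g. -/
theorem stmt3 {A : Type*} [Fintype A] [Nonempty A] [TopologicalSpace A] [DiscreteTopology A]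
    (X : Set (ℤ → A)) (hX : IsSubshift X) :
    (∃ g : (ℕ → A) → A → ℝ, IsGFunction X g) ↔ PropertyG X :=
  stmt3_general X hX
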